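/- arXiv:1802.05704 — 2 statements merged into one kernel-verified Lean document; each statement's English description precedes it below -/
import Mathlib

section
/- Let φ_λ : M × ℝ → M, λ ∈ [0,1], be a parametrized family of dissipative flows on a noncompact, locally compact metric space M, and for each λ let K_λ denote the global attractor of φ_λ. Then the family (K_λ)_{λ∈[0,1]} is a continuation of K_0 if and only if the family (φ_λ)_{λ∈[0,1]} is uniformly dissipative. -/
/-!
If the global attractors form a continuation, each `K_λ` has a compact isolating neighbourhood
`N` that still contains `K_μ` for `μ` near `λ`; compactness of `[0,1]` makes finitely many of
these cover all `K_λ`, and every omega-limit set of `φ_λ` lies in `K_λ`.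

Conversely, let `C` be a compact neighbourhood of the closure of all omega-limit sets. Every
point of `K_λ` lies on the forward orbit of a point of `C` (its alpha-limit set contains an
omega-limit set), and since `φ_{λ₀}` carries `C` uniformly into a compact neighbourhood of
`K_{λ₀}`, the same holds for `φ_λ` with `λ` near `λ₀`; so the `K_λ` stay in a fixed compact set.
A limit of points of `K_λ`, `λ → λ₀`, then has a bounded full orbit under `φ_{λ₀}` and lies in
`K_{λ₀}`. Thus `K_λ ⊆ int N` eventually, and every compact neighbourhood of a global attractor
isolates it.
-/

open Set Metric Filter Topology Bornology

section Defs

variable {M : Type*} [TopologicalSpace M]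

/-- A (continuous) flow on a topological space. -/
def IsFlow (φ : M → ℝ → M) : Prop :=
  Continuous (fun p : M × ℝ => φ p.1 p.2) ∧
    (∀ x, φ x 0 = x) ∧ ∀ x s t, φ (φ x s) t = φ x (s + t)

/-- A set `S` is invariant for the flow `φ` if `φ(S,t) = S` for every `t`. -/
def FlowInvariant (φ : M → ℝ → M) (S : Set M) : Prop :=
  ∀ t : ℝ, (fun x => φ x t) '' S = S

/-- The omega-limit set `ω(x) = ⋂_{t>0} cl (φ(x,[t,∞)))`. -/
def omegaLimitSet (φ : M → ℝ → M) (x : M) : Set M :=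
  ⋂ t ∈ Ioi (0 : ℝ), closure (φ x '' Ici t)

/-- The negative omega-limit set `ω*(x) = ⋂_{t<0} cl (φ(x,(-∞,t]))`. -/
def negOmegaLimitSet (φ : M → ℝ → M) (x : M) : Set M :=
  ⋂ t ∈ Iio (0 : ℝ), closure (φ x '' Iic t)

/-- A flow is dissipative if every omega-limit set is nonempty and the closure of the
union of all omega-limit sets is compact. -/
def Dissipative (φ : M → ℝ → M) : Prop :=
  (∀ x, (omegaLimitSet φ x).Nonempty) ∧
    IsCompact (closure (⋃ x, omegaLimitSet φ x))

/-- `K` is stable: every neighborhood `U` of `K` contains a neighborhood `V` of `K`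
with `φ(V,[0,∞)) ⊆ U`. -/
def FlowStable (φ : M → ℝ → M) (K : Set M) : Prop :=
  ∀ U ∈ nhdsSet K, ∃ V ∈ nhdsSet K, ∀ x ∈ V, ∀ t : ℝ, 0 ≤ t → φ x t ∈ U

/-- `K` is negatively stable: every neighborhood `U` of `K` contains a neighborhood `V`
of `K` with `φ(V,(-∞,0]) ⊆ U`. -/
def FlowNegStable (φ : M → ℝ → M) (K : Set M) : Prop :=
  ∀ U ∈ nhdsSet K, ∃ V ∈ nhdsSet K, ∀ x ∈ V, ∀ t : ℝ, t ≤ 0 → φ x t ∈ U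

/-- The region of attraction `A(K) = {x : ∅ ≠ ω(x) ⊆ K}`. -/
def attractionRegion (φ : M → ℝ → M) (K : Set M) : Set M :=
  {x | (omegaLimitSet φ x).Nonempty ∧ omegaLimitSet φ x ⊆ K}

/-- The region of repulsion `R(K) = {x : ∅ ≠ ω*(x) ⊆ K}`. -/
def repulsionRegion (φ : M → ℝ → M) (K : Set M) : Set M :=
  {x | (negOmegaLimitSet φ x).Nonempty ∧ negOmegaLimitSet φ x ⊆ K}

/-- An attractor: a compact invariant stable set which is attracting, i.e. its region of
attraction is a neighborhood of it. -/
def IsAttractor (φ : M → ℝ → M) (K : Set M) : Prop :=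
  IsCompact K ∧ FlowInvariant φ K ∧ FlowStable φ K ∧
    attractionRegion φ K ∈ nhdsSet K

/-- A repeller: a compact invariant negatively stable set which is repelling. -/
def IsRepeller (φ : M → ℝ → M) (K : Set M) : Prop :=
  IsCompact K ∧ FlowInvariant φ K ∧ FlowNegStable φ K ∧
    repulsionRegion φ K ∈ nhdsSet K

/-- A global attractor: a compact invariant stable set whose region of attraction is the
whole space. -/
def IsGlobalAttractor (φ : M → ℝ → M) (K : Set M) : Prop :=
  IsCompact K ∧ FlowInvariant φ K ∧ FlowStable φ K ∧
    attractionRegion φ K = univ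

/-- `N` is an isolating neighborhood of `K`: a compact neighborhood of `K` such that `K`
is the maximal invariant set contained in `N`. -/
def IsIsolatingNbhd (φ : M → ℝ → M) (N K : Set M) : Prop :=
  IsCompact N ∧ K ⊆ interior N ∧ FlowInvariant φ K ∧
    ∀ S : Set M, FlowInvariant φ S → S ⊆ N → S ⊆ K

/-- An isolated invariant set: a compact invariant set having an isolating neighborhood. -/
def IsIsolatedInvariant (φ : M → ℝ → M) (K : Set M) : Prop :=
  IsCompact K ∧ FlowInvariant φ K ∧ ∃ N, IsIsolatingNbhd φ N K

/-- A parametrized family of flows `(φ_λ)_{λ ∈ [0,1]}`: jointly continuous on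
`[0,1] × M × ℝ` and each `φ_λ` is a flow. -/
def IsParamFlow (φ : ℝ → M → ℝ → M) : Prop :=
  ContinuousOn (fun p : ℝ × M × ℝ => φ p.1 p.2.1 p.2.2)
      ((Icc 0 1 : Set ℝ) ×ˢ (univ : Set (M × ℝ))) ∧
    ∀ l ∈ Icc (0 : ℝ) 1, IsFlow (φ l)

/-- `(K_λ)_{λ ∈ J}` is a continuation: each `K_λ` is an isolated invariant set of `φ_λ`
and every isolating neighborhood of `K_{λ₀}` remains an isolating neighborhood of `K_λ`
for `λ` near `λ₀` in `J`. -/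
def IsContinuation (φ : ℝ → M → ℝ → M) (J : Set ℝ) (K : ℝ → Set M) : Prop :=
  (∀ l ∈ J, IsIsolatedInvariant (φ l) (K l)) ∧
    ∀ l₀ ∈ J, ∀ N : Set M, IsIsolatingNbhd (φ l₀) N (K l₀) →
      ∃ δ > 0, ∀ l ∈ J, |l - l₀| < δ → IsIsolatingNbhd (φ l) N (K l)

/-- The family `(φ_λ)` is uniformly dissipative. -/
def UniformlyDissipative (φ : ℝ → M → ℝ → M) : Prop :=
  (∀ l ∈ Icc (0 : ℝ) 1, ∀ x, (omegaLimitSet (φ l) x).Nonempty) ∧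
    IsCompact (closure (⋃ l ∈ Icc (0 : ℝ) 1, ⋃ x, omegaLimitSet (φ l) x))

end Defs

section NormedDefs

variable {E : Type*} [NormedAddCommGroup E]

/-- A coercive family of dissipative flows: for every continuation of the global
attractor of `φ₀`, the regions of attraction are bounded for all small `λ > 0`. -/
def CoerciveFamily (φ : ℝ → E → ℝ → E) : Prop :=
  ∀ lam1 ∈ Ioc (0 : ℝ) 1, ∀ K : ℝ → Set E,
    IsContinuation φ (Icc 0 lam1) K → IsGlobalAttractor (φ 0) (K 0) →
      ∃ lam0, 0 < lam0 ∧ lam0 ≤ lam1 ∧ ∀ l, 0 < l → l < lam0 →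
        IsBounded (attractionRegion (φ l) (K l))

/-- A polar family of dissipative flows: it has arbitrarily large bounded trajectories. -/
def PolarFamily (φ : ℝ → E → ℝ → E) : Prop :=
  ∀ L > 0, ∃ lam0 > 0, ∀ l, 0 < l → l < lam0 → l ≤ 1 →
    ∃ x : E, IsBounded (range (φ l x)) ∧
      ∃ tl < (0 : ℝ), ∀ t < tl, L < ‖φ l x t‖

/-- The set of points whose trajectory tends to infinity in negative time
(the region of repulsion of the point at infinity). -/
def escapeRegion (φ : ℝ → E → ℝ → E) (l : ℝ) : Set E :=
  {x | Tendsto (fun t => ‖φ l x t‖) atBot atTop}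

/-- The complementary isolated invariant set
`C_λ = ℝⁿ ∖ (A_λ(K_λ) ∪ R_λ(∞))`. -/
def complementarySet (φ : ℝ → E → ℝ → E) (K : ℝ → Set E) (l : ℝ) : Set E :=
  (attractionRegion (φ l) (K l) ∪ escapeRegion φ l)ᶜ

end NormedDefs

lemma FlowInvariant.mem {M : Type*} {φ : M → ℝ → M} {S : Set M} (h : FlowInvariant φ S) {x : M}
    (hx : x ∈ S) (t : ℝ) : φ x t ∈ S := by
  rw [← h t]
  exact mem_image_of_mem _ hx

section Flow

variable {M : Type*} [TopologicalSpace M] {φ : M → ℝ → M}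

namespace IsFlow

lemma continuous_apply (hf : IsFlow φ) (t : ℝ) : Continuous (φ · t) :=
  hf.1.comp (continuous_id.prodMk continuous_const)

lemma map_zero_apply (hf : IsFlow φ) (x : M) : φ x 0 = x :=
  hf.2.1 x

lemma map_map (hf : IsFlow φ) (x : M) (s t : ℝ) : φ (φ x s) t = φ x (s + t) :=
  hf.2.2 x s t

lemma map_eq_map_sub (hf : IsFlow φ) (x : M) (s t : ℝ) : φ x t = φ (φ x s) (t - s) := by
  rw [hf.map_map, add_sub_cancel]

lemma flowInvariant_range (hf : IsFlow φ) (x : M) : FlowInvariant φ (range (φ x)) := by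
  intro t
  ext y
  constructor
  · rintro ⟨_, ⟨s, rfl⟩, rfl⟩
    exact ⟨s + t, (hf.map_map x s t).symm⟩
  · rintro ⟨s, rfl⟩
    exact ⟨φ x (s - t), ⟨s - t, rfl⟩, by simp only [hf.map_map, sub_add_cancel]⟩

lemma forall_nonneg_mem_of_mapsTo (hf : IsFlow φ) {Q B : Set M} {T : ℝ} (hT : 0 < T)
    (hQ : MapsTo (φ · T) Q Q) (hB : ∀ z ∈ Q, ∀ t ∈ Icc 0 T, φ z t ∈ B) :
    ∀ z ∈ Q, ∀ t, 0 ≤ t → φ z t ∈ B := by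
  have hstep : ∀ n : ℕ, ∀ z ∈ Q, ∀ t ∈ Icc 0 ((n + 1) * T), φ z t ∈ B := by
    intro n
    induction n with
    | zero => simpa using hB
    | succ n ih =>
      intro z hz t ⟨ht₀, ht⟩
      rcases le_or_gt t T with htT | hTt
      · exact hB z hz t ⟨ht₀, htT⟩
      · rw [hf.map_eq_map_sub z T t]
        exact ih _ (hQ hz) _ ⟨by linarith, by push_cast at ht; linarith⟩
  intro z hz t ht
  obtain ⟨n, hn⟩ := exists_nat_ge (t / T)
  refine hstep n z hz t ⟨ht, ?_⟩
  have := (div_le_iff₀ hT).mp hn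
  linarith

end IsFlow

lemma isClosed_negOmegaLimitSet (x : M) : IsClosed (negOmegaLimitSet φ x) :=
  isClosed_biInter fun _ _ => isClosed_closure

lemma IsFlow.mapsTo_negOmegaLimitSet (hf : IsFlow φ) (x : M) (r : ℝ) :
    MapsTo (φ · r) (negOmegaLimitSet φ x) (negOmegaLimitSet φ x) := by
  intro p hp
  refine mem_iInter₂.mpr fun u hu => ?_
  have hpt : p ∈ closure (φ x '' Iic (min (u - r) (-1))) :=
    mem_iInter₂.mp hp _ (mem_Iio.mpr ((min_le_right _ _).trans_lt (by norm_num)))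
  refine closure_mono ?_ (image_closure_subset_closure_image (hf.continuous_apply r) ⟨p, hpt, rfl⟩)
  rintro _ ⟨_, ⟨s, hs, rfl⟩, rfl⟩
  refine ⟨s + r, ?_, (hf.map_map x s r).symm⟩
  have : s ≤ u - r := hs.trans (min_le_left _ _)
  simp only [mem_Iic]
  linarith

lemma IsFlow.omegaLimitSet_subset_negOmegaLimitSet (hf : IsFlow φ) {x p : M}
    (hp : p ∈ negOmegaLimitSet φ x) : omegaLimitSet φ p ⊆ negOmegaLimitSet φ x := by
  refine (iInter₂_subset (1 : ℝ) (by norm_num : (1 : ℝ) ∈ Ioi 0)).trans ?_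
  refine closure_minimal ?_ (isClosed_negOmegaLimitSet x)
  rintro _ ⟨r, -, rfl⟩
  exact hf.mapsTo_negOmegaLimitSet x r hp

lemma FlowInvariant.negOmegaLimitSet_nonempty [T2Space M] {K : Set M} (hKi : FlowInvariant φ K)
    (hKc : IsCompact K) {x : M} (hx : x ∈ K) : (negOmegaLimitSet φ x).Nonempty := by
  have hsub : ∀ t, closure (φ x '' Iic t) ⊆ K := fun t =>
    closure_minimal (by rintro _ ⟨s, -, rfl⟩; exact hKi.mem hx s) hKc.isClosed
  obtain ⟨p, hp⟩ : (⋂ t : Iio (0 : ℝ), closure (φ x '' Iic t.1)).Nonempty := by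
    refine IsCompact.nonempty_iInter_of_directed_nonempty_isCompact_isClosed _ ?_
      (fun t => ⟨φ x t, subset_closure ⟨t, mem_Iic.mpr le_rfl, rfl⟩⟩)
      (fun t => hKc.of_isClosed_subset isClosed_closure (hsub t)) (fun _ => isClosed_closure)
    intro t₁ t₂
    refine ⟨⟨min t₁ t₂, mem_Iio.mpr ((min_le_left _ _).trans_lt t₁.2)⟩, ?_, ?_⟩ <;>
      exact closure_mono (image_mono (Iic_subset_Iic.mpr (by simp)))
  exact ⟨p, mem_iInter₂.mpr fun t ht => mem_iInter.mp hp ⟨t, ht⟩⟩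

lemma exists_neg_mem_of_mem_negOmegaLimitSet {x c : M} (hc : c ∈ negOmegaLimitSet φ x)
    {W : Set M} (hW : IsOpen W) (hcW : c ∈ W) : ∃ s < 0, φ x s ∈ W := by
  have hc' : c ∈ closure (φ x '' Iic (-1)) := mem_iInter₂.mp hc (-1) (by norm_num)
  obtain ⟨_, hW', s, hs, rfl⟩ := mem_closure_iff.mp hc' W hW hcW
  exact ⟨s, hs.trans_lt (by norm_num), hW'⟩

/-- The alpha-limit set of `x` contains an omega-limit set, hence meets `W`. -/
lemma IsFlow.exists_map_eq_of_omegaLimitSet_subset [T2Space M] (hf : IsFlow φ) {K W : Set M}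
    (hKi : FlowInvariant φ K) (hKc : IsCompact K) (hω : ∀ p, (omegaLimitSet φ p).Nonempty)
    (hW : IsOpen W) (hωW : ∀ p, omegaLimitSet φ p ⊆ W) {x : M} (hx : x ∈ K) :
    ∃ y ∈ W, ∃ r ≥ 0, φ y r = x := by
  obtain ⟨p, hp⟩ := hKi.negOmegaLimitSet_nonempty hKc hx
  obtain ⟨c, hc⟩ := hω p
  obtain ⟨s, hs, hsW⟩ := exists_neg_mem_of_mem_negOmegaLimitSet
    (hf.omegaLimitSet_subset_negOmegaLimitSet hp hc) hW (hωW p hc)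
  exact ⟨φ x s, hsW, -s, by linarith, by rw [hf.map_map, add_neg_cancel, hf.map_zero_apply]⟩

end Flow

namespace IsGlobalAttractor

variable {M : Type*} [TopologicalSpace M] {φ : M → ℝ → M} {K : Set M}

lemma mem_attractionRegion (hK : IsGlobalAttractor φ K) (x : M) :
    x ∈ attractionRegion φ K :=
  hK.2.2.2 ▸ mem_univ x

lemma omegaLimitSet_nonempty (hK : IsGlobalAttractor φ K) (x : M) :
    (omegaLimitSet φ x).Nonempty :=
  (hK.mem_attractionRegion x).1

lemma omegaLimitSet_subset (hK : IsGlobalAttractor φ K) (x : M) : omegaLimitSet φ x ⊆ K :=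
  (hK.mem_attractionRegion x).2

lemma exists_map_mem (hK : IsGlobalAttractor φ K) {W : Set M} (hW : IsOpen W) (hKW : K ⊆ W)
    (x : M) : ∃ s, φ x s ∈ W := by
  obtain ⟨p, hp⟩ := hK.omegaLimitSet_nonempty x
  have hp' : p ∈ closure (φ x '' Ici 1) := mem_iInter₂.mp hp 1 (by norm_num)
  obtain ⟨_, hW', s, -, rfl⟩ := mem_closure_iff.mp hp' W hW (hKW (hK.omegaLimitSet_subset x hp))
  exact ⟨s, hW'⟩

/-- Stability turns the pointwise entrance times into open conditions, and a directed open
cover of `Q` has a single member covering it. -/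
lemma exists_forall_ge_mem (hK : IsGlobalAttractor φ K) (hf : IsFlow φ) {Q G : Set M}
    (hQ : IsCompact Q) (hG : IsOpen G) (hKG : K ⊆ G) :
    ∃ T > 0, ∀ z ∈ Q, ∀ t, T ≤ t → φ z t ∈ G := by
  obtain ⟨V, hV, hVG⟩ := hK.2.2.1 G (hG.mem_nhdsSet.mpr hKG)
  obtain ⟨W, hW, hKW, hWV⟩ := mem_nhdsSet_iff_exists.mp hV
  let U : ℕ → Set M := fun n => ⋃ s ∈ Iic (n : ℝ), (φ · s) ⁻¹' W
  have hU : Monotone U := fun m n hmn =>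
    biUnion_subset_biUnion_left (Iic_subset_Iic.mpr (Nat.cast_le.mpr hmn))
  have hQU : Q ⊆ ⋃ n, U n := fun z _ => by
    obtain ⟨s, hs⟩ := hK.exists_map_mem hW hKW z
    obtain ⟨n, hn⟩ := exists_nat_ge s
    exact mem_iUnion.mpr ⟨n, mem_biUnion (mem_Iic.mpr hn) hs⟩
  obtain ⟨n, hn⟩ := hQ.elim_directed_cover U
    (fun n => isOpen_biUnion fun s _ => hW.preimage (hf.continuous_apply s)) hQU hU.directed_le
  refine ⟨n + 1, by positivity, fun z hz t ht => ?_⟩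
  obtain ⟨s, hs, hsW⟩ := mem_iUnion₂.mp (hn hz)
  rw [hf.map_eq_map_sub z s t]
  exact hVG _ (hWV hsW) _ (by linarith [mem_Iic.mp hs])

lemma subset_of_flowInvariant [T1Space M] (hK : IsGlobalAttractor φ K) (hf : IsFlow φ)
    {S B : Set M} (hS : FlowInvariant φ S) (hB : IsCompact B) (hSB : S ⊆ B) : S ⊆ K := by
  intro x hx
  by_contra hxK
  obtain ⟨T, -, hT⟩ :=
    hK.exists_forall_ge_mem hf hB isOpen_compl_singleton (subset_compl_singleton_iff.mpr hxK)
  obtain ⟨z, hz, hzx⟩ : x ∈ (φ · T) '' S := (hS T).symm ▸ hx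
  exact hT z (hSB hz) T le_rfl hzx

lemma isIsolatingNbhd [T1Space M] (hK : IsGlobalAttractor φ K) (hf : IsFlow φ) {N : Set M}
    (hN : IsCompact N) (hKN : K ⊆ interior N) : IsIsolatingNbhd φ N K :=
  ⟨hN, hKN, hK.2.1, fun _ hS hSN => hK.subset_of_flowInvariant hf hS hN hSN⟩

lemma isIsolatedInvariant [T1Space M] [WeaklyLocallyCompactSpace M]
    (hK : IsGlobalAttractor φ K) (hf : IsFlow φ) : IsIsolatedInvariant φ K :=
  let ⟨N, hN, hKN⟩ := exists_compact_superset hK.1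
  ⟨hK.1, hK.2.1, N, hK.isIsolatingNbhd hf hN hKN⟩

end IsGlobalAttractor

lemma ContinuousOn.eventually_forall_mem_of_isCompact {X Y Z : Type*} [TopologicalSpace X]
    [TopologicalSpace Y] [TopologicalSpace Z] {f : X × Y → Z} {s : Set X}
    (hf : ContinuousOn f (s ×ˢ univ)) {x₀ : X} (hx₀ : x₀ ∈ s) {A : Set Y} (hA : IsCompact A)
    {U : Set Z} (hU : IsOpen U) (h : ∀ y ∈ A, f (x₀, y) ∈ U) :
    ∀ᶠ x in 𝓝[s] x₀, ∀ y ∈ A, f (x, y) ∈ U := by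
  rw [eventually_nhdsWithin_iff]
  have hA' := hA.eventually_forall_of_forall_eventually (x₀ := x₀)
    (P := fun x y => x ∈ s → f (x, y) ∈ U) fun y hy => by
      have hy' := mem_nhdsWithin_iff_eventually.mp
        (hf (x₀, y) ⟨hx₀, trivial⟩ (hU.mem_nhds (h y hy)))
      filter_upwards [hy'] with z hz hzs using hz ⟨hzs, trivial⟩
  filter_upwards [hA'] with x hx hxs y hy using hx y hy hxs

lemma eventually_nhdsWithin_iff_exists_abs_sub_lt {J : Set ℝ} {l₀ : ℝ} {P : ℝ → Prop} :
    (∀ᶠ l in 𝓝[J] l₀, P l) ↔ ∃ δ > 0, ∀ l ∈ J, |l - l₀| < δ → P l := by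
  simp only [eventually_nhdsWithin_iff, Metric.eventually_nhds_iff, Real.dist_eq]
  refine exists_congr fun δ => and_congr_right fun _ => ?_
  exact ⟨fun h l hl hlδ => h hlδ hl, fun h l hlδ hl => h l hl hlδ⟩

section ParamFlow

variable {M : Type*} [TopologicalSpace M] {φ : ℝ → M → ℝ → M} {K : ℝ → Set M}

lemma isContinuation_iff_eventually {J : Set ℝ} :
    IsContinuation φ J K ↔ (∀ l ∈ J, IsIsolatedInvariant (φ l) (K l)) ∧
      ∀ l₀ ∈ J, ∀ N, IsIsolatingNbhd (φ l₀) N (K l₀) →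
        ∀ᶠ l in 𝓝[J] l₀, IsIsolatingNbhd (φ l) N (K l) := by
  simp only [IsContinuation, eventually_nhdsWithin_iff_exists_abs_sub_lt]

lemma IsContinuation.exists_isCompact_forall_subset {J : Set ℝ} (hc : IsContinuation φ J K)
    (hJ : IsCompact J) : ∃ C, IsCompact C ∧ ∀ l ∈ J, K l ⊆ C := by
  obtain ⟨hiso, hcont⟩ := isContinuation_iff_eventually.mp hc
  refine hJ.induction_on (p := fun t => ∃ C, IsCompact C ∧ ∀ l ∈ t, K l ⊆ C)
    ⟨∅, isCompact_empty, fun _ => False.elim⟩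
    (fun _ _ hst ⟨C, hC, hKC⟩ => ⟨C, hC, fun l hl => hKC l (hst hl)⟩)
    (fun _ _ ⟨C, hC, hKC⟩ ⟨D, hD, hKD⟩ =>
      ⟨C ∪ D, hC.union hD, fun l hl => hl.elim (fun h => (hKC l h).trans subset_union_left)
        (fun h => (hKD l h).trans subset_union_right)⟩)
    fun l₀ hl₀ => ?_
  obtain ⟨-, -, N, hN⟩ := hiso l₀ hl₀
  exact ⟨_, hcont l₀ hl₀ N hN, N, hN.1, fun _ hl => hl.2.1.trans interior_subset⟩

lemma uniformlyDissipative_of_forall_subset [T2Space M]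
    (hK : ∀ l ∈ Icc (0 : ℝ) 1, IsGlobalAttractor (φ l) (K l)) {C : Set M} (hC : IsCompact C)
    (hKC : ∀ l ∈ Icc (0 : ℝ) 1, K l ⊆ C) : UniformlyDissipative φ := by
  refine ⟨fun l hl => (hK l hl).omegaLimitSet_nonempty, hC.of_isClosed_subset isClosed_closure ?_⟩
  refine closure_minimal (iUnion₂_subset fun l hl => iUnion_subset fun x => ?_) hC.isClosed
  exact ((hK l hl).omegaLimitSet_subset x).trans (hKC l hl)

namespace IsParamFlow

variable {l₀ : ℝ}

lemma tendsto_apply (hφ : IsParamFlow φ) (hl₀ : l₀ ∈ Icc (0 : ℝ) 1) {ι : Type*} {F : Filter ι}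
    {l : ι → ℝ} {x : ι → M} {a : M} (hl : Tendsto l F (𝓝[Icc 0 1] l₀))
    (hx : Tendsto x F (𝓝 a)) (t : ℝ) :
    Tendsto (fun n => φ (l n) (x n) t) F (𝓝 (φ l₀ a t)) := by
  refine (hφ.1 (l₀, a, t) ⟨hl₀, trivial⟩).tendsto.comp (f := fun n => (l n, x n, t))
    (tendsto_nhdsWithin_iff.mpr ⟨?_, ?_⟩)
  · exact (tendsto_nhdsWithin_iff.mp hl).1.prodMk_nhds (hx.prodMk_nhds tendsto_const_nhds)
  · filter_upwards [(tendsto_nhdsWithin_iff.mp hl).2] with n hn using ⟨hn, trivial⟩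

/-- Forward orbits of `Q ∪ L` under `φ_λ₀` return into `int L` by a time `T` and stay in a
compact set up to `T`; both are open conditions on `λ`, and they persist for all times. -/
lemma exists_isCompact_eventually_forall_nonneg_mem [WeaklyLocallyCompactSpace M]
    (hφ : IsParamFlow φ) (hl₀ : l₀ ∈ Icc (0 : ℝ) 1) {K₀ : Set M}
    (hK₀ : IsGlobalAttractor (φ l₀) K₀) {Q : Set M} (hQ : IsCompact Q) :
    ∃ B, IsCompact B ∧ ∀ᶠ l in 𝓝[Icc 0 1] l₀, ∀ z ∈ Q, ∀ t, 0 ≤ t → φ l z t ∈ B := by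
  obtain ⟨L, hL, hKL⟩ := exists_compact_superset hK₀.1
  have hQL := hQ.union hL
  obtain ⟨T, hT, hreturn⟩ := hK₀.exists_forall_ge_mem (hφ.2 l₀ hl₀) hQL isOpen_interior hKL
  obtain ⟨B, hB, hsegment⟩ :=
    exists_compact_superset ((hQL.prod (isCompact_Icc (a := 0) (b := T))).image (hφ.2 l₀ hl₀).1)
  refine ⟨B, hB, ?_⟩
  have hsegment' := hφ.1.eventually_forall_mem_of_isCompact hl₀ (hQL.prod isCompact_Icc)
    isOpen_interior fun q hq => hsegment (mem_image_of_mem _ hq)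
  have hreturn' := hφ.1.eventually_forall_mem_of_isCompact hl₀ (hQL.prod isCompact_singleton)
    isOpen_interior fun q (hq : q ∈ (Q ∪ L) ×ˢ {T}) => by
      rw [← Prod.mk.eta (p := q), hq.2]; exact hreturn _ hq.1 T le_rfl
  filter_upwards [hsegment', hreturn', self_mem_nhdsWithin] with l hsegment' hreturn' hl z hz
  refine (hφ.2 l hl).forall_nonneg_mem_of_mapsTo hT
    (fun z hz => Or.inr (interior_subset (hreturn' (z, T) ⟨hz, rfl⟩)))
    (fun z hz t ht => interior_subset (hsegment' (z, t) ⟨hz, ht⟩)) z (Or.inl hz)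

lemma eventually_subset_of_isOpen [FirstCountableTopology M] [T2Space M] (hφ : IsParamFlow φ)
    (hK : ∀ l ∈ Icc (0 : ℝ) 1, IsGlobalAttractor (φ l) (K l)) (hl₀ : l₀ ∈ Icc (0 : ℝ) 1)
    {B : Set M} (hB : IsCompact B) (hKB : ∀ᶠ l in 𝓝[Icc 0 1] l₀, K l ⊆ B)
    {U : Set M} (hU : IsOpen U) (hKU : K l₀ ⊆ U) : ∀ᶠ l in 𝓝[Icc 0 1] l₀, K l ⊆ U := by
  by_contra hcon
  obtain ⟨l, hl, hlP⟩ := exists_seq_forall_of_frequently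
    ((not_eventually.mp hcon).and_eventually (hKB.and self_mem_nhdsWithin))
  choose x hxK hxU using fun n => not_subset.mp (hlP n).1
  obtain ⟨a, -, ψ, hψ, hxa⟩ := hB.tendsto_subseq fun n => (hlP n).2.1 (hxK n)
  have hf₀ := hφ.2 l₀ hl₀
  have horbit : range (φ l₀ a) ⊆ B := by
    rintro _ ⟨t, rfl⟩
    refine hB.isClosed.mem_of_tendsto (hφ.tendsto_apply hl₀ (hl.comp hψ.tendsto_atTop) hxa t)
      (Eventually.of_forall fun n => ?_)
    obtain ⟨-, hKB, hl⟩ := hlP (ψ n)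
    exact hKB ((hK _ hl).2.1.mem (hxK (ψ n)) t)
  have ha : a ∈ U := hKU <| (hK l₀ hl₀).subset_of_flowInvariant hf₀ (hf₀.flowInvariant_range a)
    hB horbit ⟨0, hf₀.map_zero_apply a⟩
  obtain ⟨n, hn⟩ := (hxa.eventually (hU.mem_nhds ha)).exists
  exact hxU _ hn

end IsParamFlow

lemma UniformlyDissipative.exists_isCompact_eventually_subset [WeaklyLocallyCompactSpace M]
    [T2Space M] (hu : UniformlyDissipative φ) (hφ : IsParamFlow φ)
    (hK : ∀ l ∈ Icc (0 : ℝ) 1, IsGlobalAttractor (φ l) (K l)) {l₀ : ℝ}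
    (hl₀ : l₀ ∈ Icc (0 : ℝ) 1) : ∃ B, IsCompact B ∧ ∀ᶠ l in 𝓝[Icc 0 1] l₀, K l ⊆ B := by
  obtain ⟨C, hC, hΩC⟩ := exists_compact_superset hu.2
  obtain ⟨B, hB, hforward⟩ :=
    hφ.exists_isCompact_eventually_forall_nonneg_mem hl₀ (hK l₀ hl₀) hC
  refine ⟨B, hB, ?_⟩
  filter_upwards [hforward, self_mem_nhdsWithin] with l hforward hl x hx
  obtain ⟨y, hy, r, hr, rfl⟩ := (hφ.2 l hl).exists_map_eq_of_omegaLimitSet_subset (hK l hl).2.1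
    (hK l hl).1 (hu.1 l hl) isOpen_interior
    (fun p q hq => hΩC (subset_closure (mem_biUnion hl (mem_iUnion_of_mem p hq)))) hx
  exact hforward y (interior_subset hy) r hr

end ParamFlow

theorem globalAttractors_continuation_iff_uniformlyDissipative_general
    {M : Type*} [MetricSpace M] [LocallyCompactSpace M]
    (φ : ℝ → M → ℝ → M) (hφ : IsParamFlow φ)
    (K : ℝ → Set M) (hK : ∀ l ∈ Icc (0 : ℝ) 1, IsGlobalAttractor (φ l) (K l)) :
    IsContinuation φ (Icc 0 1) K ↔ UniformlyDissipative φ := by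
  constructor
  · intro hc
    obtain ⟨C, hC, hKC⟩ := hc.exists_isCompact_forall_subset isCompact_Icc
    exact uniformlyDissipative_of_forall_subset hK hC hKC
  · intro hu
    refine isContinuation_iff_eventually.mpr
      ⟨fun l hl => (hK l hl).isIsolatedInvariant (hφ.2 l hl), fun l₀ hl₀ N hN => ?_⟩
    obtain ⟨B, hB, hKB⟩ := hu.exists_isCompact_eventually_subset hφ hK hl₀
    filter_upwards [hφ.eventually_subset_of_isOpen hK hl₀ hB hKB isOpen_interior hN.2.1,
      self_mem_nhdsWithin] with l hlN hl
    exact (hK l hl).isIsolatingNbhd (hφ.2 l hl) hN.1 hlN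

/-- For a parametrized family of dissipative flows on a noncompact
locally compact metric space, the family of global attractors `(K_λ)_{λ∈[0,1]}` is a
continuation of `K₀` if and only if the family of flows is uniformly dissipative. -/
theorem globalAttractors_continuation_iff_uniformlyDissipative
    {M : Type*} [MetricSpace M] [LocallyCompactSpace M] [NoncompactSpace M]
    (φ : ℝ → M → ℝ → M) (hφ : IsParamFlow φ)
    (hdiss : ∀ l ∈ Icc (0 : ℝ) 1, Dissipative (φ l))
    (K : ℝ → Set M) (hK : ∀ l ∈ Icc (0 : ℝ) 1, IsGlobalAttractor (φ l) (K l)) :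
    IsContinuation φ (Icc 0 1) K ↔ UniformlyDissipative φ :=
  globalAttractors_continuation_iff_uniformlyDissipative_general φ hφ K hK
end

section
/- Let n ≥ 2 and let φ_λ : ℝⁿ × ℝ → ℝⁿ, λ ∈ [0,1], be a coercive family of dissipative flows. Let K_0 be the global attractor of φ_0 and let (K_λ)_{λ∈[0,λ₁]} be a continuation of K_0 such that each K_λ with λ ∈ (0,λ₁] is an attractor of φ_λ. Then there exists λ₀ > 0 such that for every λ with 0 < λ < λ₀ the set C_λ = ℝⁿ ∖ (A_λ(K_λ) ∪ R_λ), where R_λ = {x ∈ ℝⁿ : ‖φ_λ(x,t)‖ → ∞ as t → −∞}, is a nonempty isolated invariant compactum of φ_λ contained in ℝⁿ ∖ K_λ, the complement ℝⁿ ∖ C_λ has exactly two connected components, one bounded and one unbounded, and K_λ lies in the bounded component (which equals A_λ(K_λ)). -/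
/-
For `λ = 0` every bounded invariant set lies in the global attractor `K₀`, so large closed balls
isolate `K₀`, and by uniform attraction on compacta some ball `B ⊇ K₀` is carried into its own
interior at a fixed time `T`. By continuity in `λ` this persists for small `λ > 0`, so forward
orbits of `B` stay in a larger ball which still isolates `K_λ`; hence `B ⊆ A_λ(K_λ)`, and
`A_λ(K_λ)` is open, connected (every orbit in it meets `B`) and, by coercivity, bounded.
Dissipativity yields a radius `L` beyond which every point escapes to infinity in backward time,
so `R_λ` is open, connected (as `n ≥ 2`) and unbounded. Two disjoint nonempty open sets cannot
cover `ℝⁿ`, so `C_λ` is nonempty; it is invariant and compact, and a small closed thickening of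
`C_λ` missing `K_λ` isolates it: a bounded invariant set cannot meet `R_λ`, and points of
`A_λ(K_λ)` have their `ω`-limits in `K_λ`.
-/
open Set Metric Filter Topology Bornology

theorem isConnected_setOf_lt_norm {E : Type*} [NormedAddCommGroup E] [NormedSpace ℝ E]
    (hE : 1 < Module.rank ℝ E) {r : ℝ} (hr : 0 ≤ r) : IsConnected {x : E | r < ‖x‖} := by
  have : {x : E | r < ‖x‖} = (fun p : E × ℝ => p.2 • p.1) '' (sphere 0 1 ×ˢ Ioi r) := by
    ext x
    refine ⟨fun hx => ?_, ?_⟩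
    · have hx0 : x ≠ 0 := norm_pos_iff.1 (hr.trans_lt hx)
      refine ⟨(‖x‖⁻¹ • x, ‖x‖), ⟨by simp [norm_smul, hx0], hx⟩, ?_⟩
      simp [smul_smul, hx0]
    · rintro ⟨⟨v, t⟩, ⟨hv, ht : r < t⟩, rfl⟩
      simpa [norm_smul, mem_sphere_zero_iff_norm.1 hv, abs_of_pos (hr.trans_lt ht)] using ht
  rw [this]
  exact ((isConnected_sphere hE 0 zero_le_one).prod isConnected_Ioi).image _
    (continuous_snd.smul continuous_fst).continuousOn

theorem connectedComponentIn_union_eq_left {X : Type*} [TopologicalSpace X] {A B : Set X}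
    (hA : IsOpen A) (hB : IsOpen B) (hAB : Disjoint A B) (hAc : IsPreconnected A) {x : X}
    (hx : x ∈ A) : connectedComponentIn (A ∪ B) x = A :=
  (isPreconnected_connectedComponentIn.subset_left_of_subset_union hA hB hAB
    (connectedComponentIn_subset _ _) ⟨x, mem_connectedComponentIn (Or.inl hx), hx⟩).antisymm
    (hAc.subset_connectedComponentIn hx subset_union_left)

theorem nonempty_compl_union_of_isOpen {X : Type*} [TopologicalSpace X] [PreconnectedSpace X]
    {A B : Set X} (hA : IsOpen A) (hB : IsOpen B) (hAB : Disjoint A B) (hAne : A.Nonempty)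
    (hBne : B.Nonempty) : (A ∪ B)ᶜ.Nonempty := by
  rw [nonempty_iff_ne_empty, Ne, compl_empty_iff]
  intro h
  obtain ⟨x, -, hxA, hxB⟩ := isPreconnected_univ A B hA hB h.ge
    (by simpa using hAne) (by simpa using hBne)
  exact hAB.notMem_of_mem_left hxA hxB

namespace IsFlow

variable {M : Type*} [TopologicalSpace M] {ψ : M → ℝ → M}

theorem continuous_left (hψ : IsFlow ψ) (t : ℝ) : Continuous fun x => ψ x t :=
  hψ.1.comp (continuous_id.prodMk continuous_const)

theorem continuous_orbit (hψ : IsFlow ψ) (x : M) : Continuous (ψ x) :=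
  hψ.1.comp (continuous_const.prodMk continuous_id)

theorem apply_apply_neg (hψ : IsFlow ψ) (x : M) (t : ℝ) : ψ (ψ x t) (-t) = x := by
  rw [hψ.2.2, add_neg_cancel, hψ.2.1]

theorem apply_neg_apply (hψ : IsFlow ψ) (x : M) (t : ℝ) : ψ (ψ x (-t)) t = x := by
  simpa using hψ.apply_apply_neg x (-t)

theorem flowInvariant_of_forall_flow_mem (hψ : IsFlow ψ) {S : Set M}
    (h : ∀ x ∈ S, ∀ t, ψ x t ∈ S) : FlowInvariant ψ S := fun t =>
  (image_subset_iff.2 fun x hx => h x hx t).antisymm fun x hx =>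
    ⟨ψ x (-t), h x hx (-t), hψ.apply_neg_apply x t⟩

end IsFlow

section FlowInvariant

variable {M : Type*} {ψ : M → ℝ → M} {S : Set M}

theorem FlowInvariant.flow_mem (hS : FlowInvariant ψ S) {x : M} (hx : x ∈ S) (t : ℝ) :
    ψ x t ∈ S := by
  rw [← hS t]
  exact mem_image_of_mem _ hx

theorem FlowInvariant.flow_mem_iff [TopologicalSpace M] (hS : FlowInvariant ψ S)
    (hψ : IsFlow ψ) {x : M} {t : ℝ} : ψ x t ∈ S ↔ x ∈ S :=
  ⟨fun h => hψ.apply_apply_neg x t ▸ hS.flow_mem h (-t), fun h => hS.flow_mem h t⟩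

end FlowInvariant

section OmegaLimit

variable {M : Type*} [TopologicalSpace M] {ψ : M → ℝ → M}

theorem mem_omegaLimitSet_iff_mapClusterPt {x y : M} :
    y ∈ omegaLimitSet ψ x ↔ MapClusterPt y atTop (ψ x) := by
  rw [mapClusterPt_atTop_iff_forall_mem_closure, omegaLimitSet, mem_iInter₂]
  refine ⟨fun h t => ?_, fun h t _ => h t⟩
  exact closure_mono (image_mono (Ici_subset_Ici.2 (le_max_left t 1)))
    (h (max t 1) (lt_max_of_lt_right one_pos : (0 : ℝ) < max t 1))

theorem omegaLimitSet_subset_of_forall_flow_mem {x : M} {S : Set M} (hS : IsClosed S)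
    (h : ∀ t, 0 ≤ t → ψ x t ∈ S) : omegaLimitSet ψ x ⊆ S := fun _ hy =>
  hS.mem_of_mapClusterPt (mem_omegaLimitSet_iff_mapClusterPt.1 hy)
    (eventually_ge_atTop 0 |>.mono h)

theorem frequently_flow_mem_of_omegaLimitSet_subset {x : M} {U : Set M}
    (hne : (omegaLimitSet ψ x).Nonempty) (hU : IsOpen U) (h : omegaLimitSet ψ x ⊆ U) :
    ∃ᶠ t in atTop, ψ x t ∈ U := by
  obtain ⟨y, hy⟩ := hne
  exact (mem_omegaLimitSet_iff_mapClusterPt.1 hy).frequently (hU.mem_nhds (h hy))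

theorem IsFlow.omegaLimitSet_flow (hψ : IsFlow ψ) (x : M) (s : ℝ) :
    omegaLimitSet ψ (ψ x s) = omegaLimitSet ψ x := by
  ext y
  have : ψ (ψ x s) = ψ x ∘ fun t => t + s := funext fun t => by simp [hψ.2.2, add_comm]
  rw [mem_omegaLimitSet_iff_mapClusterPt, mem_omegaLimitSet_iff_mapClusterPt, this,
    mapClusterPt_comp, map_add_atTop_eq]

theorem IsFlow.flowInvariant_omegaLimitSet (hψ : IsFlow ψ) (x : M) :
    FlowInvariant ψ (omegaLimitSet ψ x) := by
  refine hψ.flowInvariant_of_forall_flow_mem fun y hy t => ?_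
  have hcomp : (fun s => ψ (ψ x s) t) = ψ x ∘ fun s => s + t := funext fun s => hψ.2.2 x s t
  rw [mem_omegaLimitSet_iff_mapClusterPt] at hy ⊢
  have := hy.continuousAt_comp (hψ.continuous_left t).continuousAt
  rwa [Function.comp_def, hcomp, mapClusterPt_comp, map_add_atTop_eq] at this

theorem IsFlow.flowInvariant_attractionRegion (hψ : IsFlow ψ) (K : Set M) :
    FlowInvariant ψ (attractionRegion ψ K) :=
  hψ.flowInvariant_of_forall_flow_mem fun x hx t => by
    simpa [attractionRegion, hψ.omegaLimitSet_flow] using hx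

end OmegaLimit

section Flow

variable {M : Type*} [TopologicalSpace M] {ψ : M → ℝ → M}

theorem IsFlow.exists_uniform_hitting_time (hψ : IsFlow ψ) {B U : Set M} {I : Set ℝ}
    (hB : IsCompact B) (hU : IsOpen U) (h : ∀ x ∈ B, ∃ t ∈ I, ψ x t ∈ U) :
    ∃ T, ∀ x ∈ B, ∃ t ∈ I, t ≤ T ∧ ψ x t ∈ U := by
  obtain ⟨F, hFI, hF, hBF⟩ := hB.elim_finite_subcover_image (b := I)
    (c := fun t => (fun x => ψ x t) ⁻¹' U) (fun t _ => hU.preimage (hψ.continuous_left t))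
    fun x hx => let ⟨t, ht, hxt⟩ := h x hx; mem_iUnion₂.2 ⟨t, ht, hxt⟩
  obtain ⟨T, hT⟩ := hF.bddAbove
  refine ⟨T, fun x hx => ?_⟩
  obtain ⟨t, htF, hxt⟩ := mem_iUnion₂.1 (hBF hx)
  exact ⟨t, hFI htF, hT htF, hxt⟩

theorem FlowStable.exists_forall_ge_flow_mem {K B U : Set M} (hK : FlowStable ψ K)
    (hψ : IsFlow ψ) (hB : IsCompact B) (hBA : B ⊆ attractionRegion ψ K) (hU : U ∈ nhdsSet K) :
    ∃ T, ∀ x ∈ B, ∀ t, T ≤ t → ψ x t ∈ U := by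
  obtain ⟨V, hV, hVU⟩ := hK U hU
  have hit : ∀ x ∈ B, ∃ t ∈ univ, ψ x t ∈ interior V := fun x hx =>
    have hxA := hBA hx
    let ⟨t, ht⟩ := (frequently_flow_mem_of_omegaLimitSet_subset hxA.1 isOpen_interior
      (hxA.2.trans (subset_interior_iff_mem_nhdsSet.2 hV))).exists
    ⟨t, trivial, ht⟩
  obtain ⟨T, hT⟩ := hψ.exists_uniform_hitting_time hB isOpen_interior hit
  refine ⟨T, fun x hx t ht => ?_⟩
  obtain ⟨s, -, hsT, hs⟩ := hT x hx
  simpa [hψ.2.2] using hVU _ (interior_subset hs) (t - s) (by linarith)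

theorem FlowStable.subset_of_flowInvariant [T1Space M] {K B S : Set M} (hK : FlowStable ψ K)
    (hψ : IsFlow ψ) (hS : FlowInvariant ψ S) (hB : IsCompact B) (hSB : S ⊆ B)
    (hBA : B ⊆ attractionRegion ψ K) : S ⊆ K := by
  intro x hxS
  by_contra hxK
  obtain ⟨T, hT⟩ := hK.exists_forall_ge_flow_mem hψ hB hBA
    (isOpen_compl_singleton.mem_nhdsSet.2 fun y hy (hyx : y = x) => hxK (hyx ▸ hy))
  exact hT _ (hSB (hS.flow_mem hxS (-T))) T le_rfl (hψ.apply_neg_apply x T)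

theorem IsFlow.forall_flow_mem_of_return (hψ : IsFlow ψ) {B W : Set M} {τ : ℝ} (hτ : 0 < τ)
    (hret : ∀ x ∈ B, ∃ t, τ ≤ t ∧ ψ x t ∈ B ∧ ∀ s ∈ Icc 0 t, ψ x s ∈ W) :
    ∀ x ∈ B, ∀ t, 0 ≤ t → ψ x t ∈ W := by
  have key : ∀ n : ℕ, ∀ x ∈ B, ∀ s ∈ Icc 0 (n * τ), ψ x s ∈ W := by
    intro n
    induction n with
    | zero =>
      intro x hx s hs
      obtain ⟨t, hτt, -, hW⟩ := hret x hx
      exact hW s ⟨hs.1, hs.2.trans (by rw [Nat.cast_zero, zero_mul]; linarith)⟩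
    | succ n ih =>
      intro x hx s hs
      obtain ⟨t, hτt, hxt, hW⟩ := hret x hx
      rcases le_or_gt s t with hst | hts
      · exact hW s ⟨hs.1, hst⟩
      · have := ih _ hxt (s - t) ⟨by linarith, by push_cast at hs; linarith [hs.2]⟩
        rwa [hψ.2.2, add_sub_cancel] at this
  intro x hx t ht
  obtain ⟨n, hn⟩ := exists_nat_ge (t / τ)
  exact key n x hx t ⟨ht, (div_le_iff₀ hτ).1 hn⟩

theorem FlowInvariant.isOpen_of_forall_exists_flow_mem {S U : Set M} (hS : FlowInvariant ψ S)
    (hψ : IsFlow ψ) (hU : IsOpen U) (hUS : U ⊆ S) (h : ∀ x ∈ S, ∃ t, ψ x t ∈ U) : IsOpen S :=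
  isOpen_iff_forall_mem_open.2 fun x hx =>
    let ⟨t, ht⟩ := h x hx
    ⟨_, fun _ hy => (hS.flow_mem_iff hψ).1 (hUS hy), hU.preimage (hψ.continuous_left t), ht⟩

theorem FlowInvariant.isConnected_of_forall_exists_flow_mem {S P : Set M}
    (hS : FlowInvariant ψ S) (hψ : IsFlow ψ) (hP : IsConnected P) (hPS : P ⊆ S)
    (h : ∀ x ∈ S, ∃ t, ψ x t ∈ P) : IsConnected S := by
  obtain ⟨p, hp⟩ := hP.nonempty
  refine ⟨⟨p, hPS hp⟩, isPreconnected_of_forall p fun y hy => ?_⟩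
  obtain ⟨t, ht⟩ := h y hy
  refine ⟨P ∪ ψ y '' uIcc 0 t, union_subset hPS ?_, Or.inl hp, Or.inr ⟨0, left_mem_uIcc, hψ.2.1 y⟩,
    hP.isPreconnected.union (ψ y t) ht ⟨t, right_mem_uIcc, rfl⟩
      (isPreconnected_uIcc.image _ (hψ.continuous_orbit y).continuousOn)⟩
  rintro _ ⟨s, -, rfl⟩
  exact hS.flow_mem hy s

end Flow

section Dissipative

variable {E : Type*} [NormedAddCommGroup E] {ψ : E → ℝ → E}

theorem Dissipative.exists_forall_omegaLimitSet_subset_ball (hd : Dissipative ψ) :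
    ∃ r, ∀ x, omegaLimitSet ψ x ⊆ ball 0 r := by
  obtain ⟨r, hr⟩ := hd.2.isBounded.subset_ball 0
  exact ⟨r, fun x => (subset_iUnion (omegaLimitSet ψ) x).trans (subset_closure.trans hr)⟩

variable [ProperSpace E]

theorem Dissipative.exists_uniform_hitting_time (hd : Dissipative ψ) (hψ : IsFlow ψ) {r : ℝ}
    (hr : ∀ x, omegaLimitSet ψ x ⊆ ball 0 r) (ρ : ℝ) :
    ∃ T, ∀ x ∈ closedBall (0 : E) ρ, ∃ t ∈ Ici (1 : ℝ), t ≤ T ∧ ψ x t ∈ ball 0 r :=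
  hψ.exists_uniform_hitting_time (isCompact_closedBall 0 ρ) isOpen_ball fun x _ =>
    ((frequently_flow_mem_of_omegaLimitSet_subset (hd.1 x) isOpen_ball (hr x)).and_eventually
      (eventually_ge_atTop 1)).exists.imp fun _ h => ⟨h.2, h.1⟩

theorem Dissipative.exists_forall_norm_flow_le (hd : Dissipative ψ) (hψ : IsFlow ψ) {r : ℝ}
    (hr : ∀ x, omegaLimitSet ψ x ⊆ ball 0 r) :
    ∃ L, ∀ x ∈ closedBall (0 : E) r, ∀ t, 0 ≤ t → ‖ψ x t‖ ≤ L := by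
  obtain ⟨T, hT⟩ := hd.exists_uniform_hitting_time hψ hr r
  obtain ⟨L, hL⟩ := (((isCompact_closedBall (0 : E) r).prod isCompact_Icc).image
    hψ.1).isBounded.subset_closedBall (0 : E)
  have hret : ∀ x ∈ closedBall (0 : E) r, ∃ t, 1 ≤ t ∧ ψ x t ∈ closedBall 0 r ∧
      ∀ s ∈ Icc 0 t, ψ x s ∈ closedBall (0 : E) L := fun x hx => by
    obtain ⟨t, ht1, htT, hxt⟩ := hT x hx
    exact ⟨t, ht1, ball_subset_closedBall hxt, fun s hs =>
      hL ⟨(x, s), ⟨hx, hs.1, hs.2.trans htT⟩, rfl⟩⟩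
  exact ⟨L, fun x hx t ht => mem_closedBall_zero_iff.1 <|
    hψ.forall_flow_mem_of_return one_pos hret x hx t ht⟩

theorem Dissipative.exists_forall_tendsto_norm_atBot (hd : Dissipative ψ) (hψ : IsFlow ψ) :
    ∃ L, ∀ x : E, L < ‖x‖ → Tendsto (fun t => ‖ψ x t‖) atBot atTop := by
  obtain ⟨r, hr⟩ := hd.exists_forall_omegaLimitSet_subset_ball
  obtain ⟨L, hL⟩ := hd.exists_forall_norm_flow_le hψ hr
  refine ⟨L, fun x hx => tendsto_atTop.2 fun ρ => ?_⟩
  have hpast : ∀ s ≤ 0, ψ x s ∉ ball 0 r := fun s hs hxs => by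
    have := hL _ (ball_subset_closedBall hxs) (-s) (neg_nonneg.2 hs)
    rw [hψ.apply_apply_neg] at this
    linarith
  obtain ⟨T, hT⟩ := hd.exists_uniform_hitting_time hψ hr ρ
  filter_upwards [eventually_le_atBot (-T)] with s hs
  by_contra! hρ
  obtain ⟨t, -, htT, hxt⟩ := hT _ (mem_closedBall_zero_iff.2 hρ.le)
  rw [hψ.2.2] at hxt
  exact hpast (s + t) (by linarith) hxt

end Dissipative

section EscapeRegion

variable {E : Type*} [NormedAddCommGroup E] {φ : ℝ → E → ℝ → E} {l : ℝ}

theorem IsFlow.flowInvariant_escapeRegion (hψ : IsFlow (φ l)) :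
    FlowInvariant (φ l) (escapeRegion φ l) :=
  hψ.flowInvariant_of_forall_flow_mem fun x (hx : Tendsto _ _ _) t => by
    have : (fun s => ‖φ l (φ l x t) s‖) = (fun s => ‖φ l x s‖) ∘ (t + ·) :=
      funext fun s => congrArg norm (hψ.2.2 x t s)
    change Tendsto _ _ _
    rw [this]
    exact hx.comp (tendsto_atBot_add_const_left _ t tendsto_id)

theorem Bornology.IsBounded.disjoint_escapeRegion {S : Set E} (hb : IsBounded S)
    (hS : FlowInvariant (φ l) S) : Disjoint S (escapeRegion φ l) := by
  obtain ⟨c, hc⟩ := hb.subset_closedBall 0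
  refine disjoint_left.2 fun x hxS (hxR : Tendsto _ _ _) => ?_
  obtain ⟨t, ht⟩ := (hxR.eventually_gt_atTop c).exists
  exact ht.not_ge (mem_closedBall_zero_iff.1 (hc (hS.flow_mem hxS t)))

variable {L : ℝ}

theorem isOpen_escapeRegion (hL : ∀ x : E, L < ‖x‖ → x ∈ escapeRegion φ l)
    (hψ : IsFlow (φ l)) : IsOpen (escapeRegion φ l) :=
  hψ.flowInvariant_escapeRegion.isOpen_of_forall_exists_flow_mem hψ
    (isOpen_lt continuous_const continuous_norm) hL fun _ hx =>
      (Tendsto.eventually_gt_atTop hx L).exists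

theorem isConnected_escapeRegion [NormedSpace ℝ E]
    (hL : ∀ x : E, L < ‖x‖ → x ∈ escapeRegion φ l) (hE : 1 < Module.rank ℝ E)
    (hψ : IsFlow (φ l)) : IsConnected (escapeRegion φ l) := by
  have hL' : ∀ x : E, max L 0 < ‖x‖ → x ∈ escapeRegion φ l := fun x hx =>
    hL x ((le_max_left L 0).trans_lt hx)
  exact hψ.flowInvariant_escapeRegion.isConnected_of_forall_exists_flow_mem hψ
    (isConnected_setOf_lt_norm hE (le_max_right L 0)) hL' fun _ hx =>
      (Tendsto.eventually_gt_atTop hx _).exists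

theorem not_isBounded_escapeRegion [NormedSpace ℝ E] [Nontrivial E]
    (hL : ∀ x : E, L < ‖x‖ → x ∈ escapeRegion φ l) :
    ¬IsBounded (escapeRegion φ l) := fun hb => by
  obtain ⟨c, hc⟩ := hb.subset_closedBall 0
  obtain ⟨x, hx⟩ := NormedSpace.exists_lt_norm ℝ E (max L c)
  exact ((le_max_right L c).trans_lt hx).not_ge
    (mem_closedBall_zero_iff.1 (hc (hL x ((le_max_left L c).trans_lt hx))))

end EscapeRegion

section AttractionRegion

variable {M : Type*} [TopologicalSpace M] {ψ : M → ℝ → M} {K B : Set M}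

theorem IsIsolatingNbhd.subset_attractionRegion [T2Space M] {N : Set M}
    (hN : IsIsolatingNbhd ψ N K) (hψ : IsFlow ψ) (hω : ∀ x, (omegaLimitSet ψ x).Nonempty)
    (hB : ∀ x ∈ B, ∀ t, 0 ≤ t → ψ x t ∈ N) : B ⊆ attractionRegion ψ K := fun x hx =>
  ⟨hω x, hN.2.2.2 _ (hψ.flowInvariant_omegaLimitSet x)
    (omegaLimitSet_subset_of_forall_flow_mem hN.1.isClosed (hB x hx))⟩

theorem isOpen_attractionRegion (hψ : IsFlow ψ) (hKB : K ⊆ interior B)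
    (hBA : B ⊆ attractionRegion ψ K) : IsOpen (attractionRegion ψ K) :=
  (hψ.flowInvariant_attractionRegion K).isOpen_of_forall_exists_flow_mem hψ isOpen_interior
    (interior_subset.trans hBA) fun _ hx =>
      (frequently_flow_mem_of_omegaLimitSet_subset hx.1 isOpen_interior (hx.2.trans hKB)).exists

theorem isConnected_attractionRegion (hψ : IsFlow ψ) (hB : IsConnected B) (hKB : K ⊆ interior B)
    (hBA : B ⊆ attractionRegion ψ K) : IsConnected (attractionRegion ψ K) :=
  (hψ.flowInvariant_attractionRegion K).isConnected_of_forall_exists_flow_mem hψ hB hBA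
    fun _ hx => (frequently_flow_mem_of_omegaLimitSet_subset hx.1 isOpen_interior
      (hx.2.trans hKB)).exists.imp fun _ h => interior_subset h

end AttractionRegion

section ComplementarySet

variable {E : Type*} [NormedAddCommGroup E] {φ : ℝ → E → ℝ → E} {K : ℝ → Set E} {l : ℝ}

theorem IsFlow.flowInvariant_complementarySet (hψ : IsFlow (φ l)) :
    FlowInvariant (φ l) (complementarySet φ K l) :=
  hψ.flowInvariant_of_forall_flow_mem fun x hx t => by
    simpa only [complementarySet, mem_compl_iff, mem_union,
      (hψ.flowInvariant_attractionRegion (K l)).flow_mem_iff hψ,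
      hψ.flowInvariant_escapeRegion.flow_mem_iff hψ] using hx

variable [ProperSpace E]

theorem isCompact_complementarySet (hA : IsOpen (attractionRegion (φ l) (K l)))
    (hR : IsOpen (escapeRegion φ l)) {L : ℝ} (hL : ∀ x : E, L < ‖x‖ → x ∈ escapeRegion φ l) :
    IsCompact (complementarySet φ K l) :=
  (isCompact_closedBall (0 : E) L).of_isClosed_subset (hA.union hR).isClosed_compl
    fun x hx => mem_closedBall_zero_iff.2 (not_lt.1 fun h => hx (Or.inr (hL x h)))

theorem isIsolatedInvariant_complementarySet (hψ : IsFlow (φ l)) (hK : IsClosed (K l))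
    (hKA : K l ⊆ attractionRegion (φ l) (K l)) (hC : IsCompact (complementarySet φ K l)) :
    IsIsolatedInvariant (φ l) (complementarySet φ K l) := by
  have hCinv : FlowInvariant (φ l) (complementarySet φ K l) := hψ.flowInvariant_complementarySet
  have hCK : Disjoint (complementarySet φ K l) (K l) :=
    disjoint_left.2 fun x hxC hxK => hxC (Or.inl (hKA hxK))
  obtain ⟨δ, hδ, hNK⟩ := hCK.exists_cthickenings hC hK
  have hN : IsCompact (cthickening δ (complementarySet φ K l)) := hC.cthickening
  refine ⟨hC, hCinv, _, hN, (self_subset_thickening hδ _).trans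
    (interior_maximal (thickening_subset_cthickening δ _) isOpen_thickening), hCinv,
    fun S hS hSN x hxS => ?_⟩
  rintro (hxA | hxR)
  · have hω' : omegaLimitSet (φ l) x ⊆ cthickening δ (complementarySet φ K l) :=
      omegaLimitSet_subset_of_forall_flow_mem hN.isClosed fun t _ => hSN (hS.flow_mem hxS t)
    obtain ⟨y, hy⟩ := hxA.1
    exact hNK.notMem_of_mem_left (hω' hy) (self_subset_cthickening _ (hxA.2 hy))
  · exact ((hN.isBounded.subset hSN).disjoint_escapeRegion hS).notMem_of_mem_left hxS hxR

end ComplementarySet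

theorem complementarySet_separates {E : Type*} [NormedAddCommGroup E] [NormedSpace ℝ E]
    [ProperSpace E] (hE : 1 < Module.rank ℝ E) {φ : ℝ → E → ℝ → E} {K : ℝ → Set E} {l : ℝ}
    (hψ : IsFlow (φ l)) (hd : Dissipative (φ l)) (hK : IsClosed (K l))
    (hAb : IsBounded (attractionRegion (φ l) (K l))) {B N : Set E} (hB : IsConnected B)
    (hKB : K l ⊆ interior B) (hBN : ∀ x ∈ B, ∀ t, 0 ≤ t → φ l x t ∈ N)
    (hN : IsIsolatingNbhd (φ l) N (K l)) :
    (complementarySet φ K l).Nonempty ∧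
      IsIsolatedInvariant (φ l) (complementarySet φ K l) ∧
      complementarySet φ K l ⊆ (K l)ᶜ ∧
      ∃ U V : Set E,
        IsConnected U ∧ IsConnected V ∧ IsBounded U ∧ ¬ IsBounded V ∧
        Disjoint U V ∧ U ∪ V = (complementarySet φ K l)ᶜ ∧
        (∀ x ∈ (complementarySet φ K l)ᶜ,
          connectedComponentIn ((complementarySet φ K l)ᶜ) x = U ∨
            connectedComponentIn ((complementarySet φ K l)ᶜ) x = V) ∧
        K l ⊆ U ∧ U = attractionRegion (φ l) (K l) := by
  have : Nontrivial E := rank_pos_iff_nontrivial.1 (zero_lt_one.trans hE)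
  have hBA := hN.subset_attractionRegion hψ hd.1 hBN
  have hKA : K l ⊆ attractionRegion (φ l) (K l) := hKB.trans (interior_subset.trans hBA)
  have hAo := isOpen_attractionRegion hψ hKB hBA
  have hAc := isConnected_attractionRegion hψ hB hKB hBA
  obtain ⟨L, hL⟩ := hd.exists_forall_tendsto_norm_atBot hψ
  have hRo := isOpen_escapeRegion hL hψ
  have hRc := isConnected_escapeRegion hL hE hψ
  have hAR := hAb.disjoint_escapeRegion (hψ.flowInvariant_attractionRegion (K l))
  have hCc : (complementarySet φ K l)ᶜ = attractionRegion (φ l) (K l) ∪ escapeRegion φ l :=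
    compl_compl _
  refine ⟨nonempty_compl_union_of_isOpen hAo hRo hAR hAc.nonempty hRc.nonempty,
    isIsolatedInvariant_complementarySet hψ hK hKA (isCompact_complementarySet hAo hRo hL),
    fun x hx hxK => hx (Or.inl (hKA hxK)), _, _, hAc, hRc, hAb, not_isBounded_escapeRegion hL,
    hAR, hCc.symm, ?_, hKA, rfl⟩
  rw [hCc]
  rintro x (hx | hx)
  · exact Or.inl (connectedComponentIn_union_eq_left hAo hRo hAR hAc.isPreconnected hx)
  · rw [union_comm]
    exact Or.inr (connectedComponentIn_union_eq_left hRo hAo hAR.symm hRc.isPreconnected hx)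

section Family

variable {M : Type*} [TopologicalSpace M] {φ : ℝ → M → ℝ → M}

theorem IsParamFlow.eventually_forall_mem (hφ : IsParamFlow φ) {Q : Set (M × ℝ)}
    (hQ : IsCompact Q) {W : Set M} (hW : IsOpen W) (h0 : ∀ p ∈ Q, φ 0 p.1 p.2 ∈ W) :
    ∀ᶠ l in 𝓝[>] 0, ∀ p ∈ Q, φ l p.1 p.2 ∈ W := by
  let c : ℝ → ℝ := fun l => max 0 (min 1 l)
  have hg : Continuous fun q : ℝ × M × ℝ => φ (c q.1) q.2.1 q.2.2 :=
    hφ.1.comp_continuous ((continuous_const.max (continuous_const.min continuous_fst)).prodMk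
      continuous_snd) fun q => ⟨⟨le_max_left _ _, max_le zero_le_one (min_le_left _ _)⟩, trivial⟩
  have hc : ∀ᶠ l in 𝓝 0, ∀ p ∈ Q, φ (c l) p.1 p.2 ∈ W :=
    hQ.eventually_forall_of_forall_eventually fun p hp =>
      hg.continuousAt.preimage_mem_nhds (hW.mem_nhds (by simpa [c] using h0 p hp))
  filter_upwards [nhdsWithin_le_nhds hc, Ioo_mem_nhdsGT one_pos] with l hl hl1
  simpa [c, max_eq_right hl1.1.le, min_eq_right hl1.2.le] using hl

theorem IsContinuation.eventually_isIsolatingNbhd {a : ℝ} {K : ℝ → Set M}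
    (hK : IsContinuation φ (Icc 0 a) K) (ha : 0 < a) {N : Set M}
    (hN : IsIsolatingNbhd (φ 0) N (K 0)) : ∀ᶠ l in 𝓝[>] 0, IsIsolatingNbhd (φ l) N (K l) := by
  obtain ⟨δ, hδ, h⟩ := hK.2 0 ⟨le_rfl, ha.le⟩ N hN
  filter_upwards [Ioo_mem_nhdsGT (lt_min hδ ha)] with l hl
  refine h l ⟨hl.1.le, hl.2.le.trans (min_le_right _ _)⟩ ?_
  rw [sub_zero, abs_of_pos hl.1]
  exact hl.2.trans_le (min_le_left _ _)

end Family

section NormedFamily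

variable {E : Type*} [NormedAddCommGroup E] {φ : ℝ → E → ℝ → E}

theorem CoerciveFamily.eventually_isBounded (hφ : CoerciveFamily φ) {a : ℝ} (ha : a ∈ Ioc 0 1)
    {K : ℝ → Set E} (hK : IsContinuation φ (Icc 0 a) K) (hK0 : IsGlobalAttractor (φ 0) (K 0)) :
    ∀ᶠ l in 𝓝[>] 0, IsBounded (attractionRegion (φ l) (K l)) := by
  obtain ⟨b, hb, -, h⟩ := hφ a ha K hK hK0
  filter_upwards [Ioo_mem_nhdsGT hb] with l hl using h l hl.1 hl.2

variable [ProperSpace E]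

theorem IsGlobalAttractor.isIsolatingNbhd_closedBall {ψ : E → ℝ → E} {K : Set E}
    (hK : IsGlobalAttractor ψ K) (hψ : IsFlow ψ) {r : ℝ} (hr : K ⊆ ball 0 r) :
    IsIsolatingNbhd ψ (closedBall 0 r) K :=
  ⟨isCompact_closedBall 0 r, hr.trans ball_subset_interior_closedBall, hK.2.1,
    fun _ hS hSN => hK.2.2.1.subset_of_flowInvariant hψ hS (isCompact_closedBall 0 r) hSN
      (hK.2.2.2 ▸ subset_univ _)⟩

theorem IsParamFlow.exists_eventually_forall_flow_mem_closedBall (hφ : IsParamFlow φ)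
    {K₀ : Set E} (hK₀ : IsGlobalAttractor (φ 0) K₀) {r : ℝ} (hr : K₀ ⊆ ball 0 r) :
    ∃ R, r ≤ R ∧ ∀ᶠ l in 𝓝[>] 0, ∀ x ∈ closedBall (0 : E) r, ∀ t, 0 ≤ t →
      φ l x t ∈ closedBall 0 R := by
  have hψ₀ : IsFlow (φ 0) := hφ.2 0 ⟨le_rfl, zero_le_one⟩
  obtain ⟨T, hT⟩ := hK₀.2.2.1.exists_forall_ge_flow_mem hψ₀ (isCompact_closedBall 0 r)
    (hK₀.2.2.2 ▸ subset_univ _) (isOpen_ball.mem_nhdsSet.2 hr)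
  have hQ : IsCompact (closedBall (0 : E) r ×ˢ Icc 0 (max T 1)) :=
    (isCompact_closedBall 0 r).prod isCompact_Icc
  obtain ⟨R, hR⟩ := (hQ.image hψ₀.1).isBounded.subset_ball 0
  refine ⟨max r R, le_max_left r R, ?_⟩
  filter_upwards [hφ.eventually_forall_mem ((isCompact_closedBall 0 r).prod isCompact_singleton)
      isOpen_ball fun p hp => hT p.1 hp.1 p.2 (hp.2 ▸ le_max_left T 1),
    hφ.eventually_forall_mem hQ isOpen_ball fun p hp => hR ⟨p, hp, rfl⟩,
    Ioo_mem_nhdsGT one_pos] with l hret hseg hl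
  exact (hφ.2 l ⟨hl.1.le, hl.2.le⟩).forall_flow_mem_of_return (lt_max_of_lt_right one_pos)
    fun x hx => ⟨max T 1, le_rfl, ball_subset_closedBall (hret (x, max T 1) ⟨hx, rfl⟩),
      fun s hs => closedBall_subset_closedBall (le_max_right r R)
        (ball_subset_closedBall (hseg (x, s) ⟨hx, hs⟩))⟩

end NormedFamily

theorem coercive_complementarySet_separates_general {n : ℕ} (hn : 2 ≤ n)
    (φ : ℝ → EuclideanSpace ℝ (Fin n) → ℝ → EuclideanSpace ℝ (Fin n))
    (hφ : IsParamFlow φ)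
    (hdiss : ∀ l ∈ Icc (0 : ℝ) 1, Dissipative (φ l))
    (hcoer : CoerciveFamily φ)
    (lam1 : ℝ) (hlam1 : lam1 ∈ Ioc (0 : ℝ) 1)
    (K : ℝ → Set (EuclideanSpace ℝ (Fin n)))
    (hcont : IsContinuation φ (Icc 0 lam1) K)
    (hK0 : IsGlobalAttractor (φ 0) (K 0)) :
    ∃ lam0, 0 < lam0 ∧ lam0 ≤ lam1 ∧ ∀ l, 0 < l → l < lam0 →
      (complementarySet φ K l).Nonempty ∧
      IsIsolatedInvariant (φ l) (complementarySet φ K l) ∧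
      complementarySet φ K l ⊆ (K l)ᶜ ∧
      ∃ U V : Set (EuclideanSpace ℝ (Fin n)),
        IsConnected U ∧ IsConnected V ∧ IsBounded U ∧ ¬ IsBounded V ∧
        Disjoint U V ∧ U ∪ V = (complementarySet φ K l)ᶜ ∧
        (∀ x ∈ (complementarySet φ K l)ᶜ,
          connectedComponentIn ((complementarySet φ K l)ᶜ) x = U ∨
            connectedComponentIn ((complementarySet φ K l)ᶜ) x = V) ∧
        K l ⊆ U ∧ U = attractionRegion (φ l) (K l) := by
  have hE : 1 < Module.rank ℝ (EuclideanSpace ℝ (Fin n)) := by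
    rw [← Module.finrank_eq_rank, finrank_euclideanSpace_fin]
    exact_mod_cast hn
  have hψ₀ : IsFlow (φ 0) := hφ.2 0 ⟨le_rfl, zero_le_one⟩
  obtain ⟨r, hr⟩ := hK0.1.isBounded.subset_ball (0 : EuclideanSpace ℝ (Fin n))
  have hr' : K 0 ⊆ ball 0 (max r 0) := hr.trans (ball_subset_ball (le_max_left r 0))
  obtain ⟨R, hrR, hforward⟩ := hφ.exists_eventually_forall_flow_mem_closedBall hK0 hr'
  obtain ⟨u, hu, hsmall⟩ := mem_nhdsGT_iff_exists_Ioo_subset.1 <| hforward.and <|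
    (hcont.eventually_isIsolatingNbhd hlam1.1 (hK0.isIsolatingNbhd_closedBall hψ₀ hr')).and <|
    (hcont.eventually_isIsolatingNbhd hlam1.1
      (hK0.isIsolatingNbhd_closedBall hψ₀ (hr'.trans (ball_subset_ball hrR)))).and <|
    (hcoer.eventually_isBounded hlam1 hcont hK0).and (Ioo_mem_nhdsGT hlam1.1)
  refine ⟨min u lam1, lt_min hu hlam1.1, min_le_right u lam1, fun l hl hlu => ?_⟩
  obtain ⟨hBR, hB, hR, hA, hl0, hl1⟩ := hsmall ⟨hl, hlu.trans_le (min_le_left u lam1)⟩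
  have hlI : l ∈ Icc (0 : ℝ) 1 := ⟨hl0.le, hl1.le.trans hlam1.2⟩
  exact complementarySet_separates hE (hφ.2 l hlI) (hdiss l hlI)
    (hcont.1 l ⟨hl0.le, hl1.le⟩).1.isClosed hA (isConnected_closedBall (le_max_right r 0))
    hB.2.1 hBR hR

/-- For a coercive family of dissipative flows on `ℝⁿ` (`n ≥ 2`) and a
continuation `(K_λ)` of the global attractor `K₀` by attractors, for all small `λ > 0`
the set `C_λ = ℝⁿ ∖ (A_λ(K_λ) ∪ R_λ)` is a nonempty isolated invariant compactum
contained in `ℝⁿ ∖ K_λ`, its complement has exactly two connected components, one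
bounded and one unbounded, and `K_λ` lies in the bounded one, which equals
`A_λ(K_λ)`. -/
theorem coercive_complementarySet_separates {n : ℕ} (hn : 2 ≤ n)
    (φ : ℝ → EuclideanSpace ℝ (Fin n) → ℝ → EuclideanSpace ℝ (Fin n))
    (hφ : IsParamFlow φ)
    (hdiss : ∀ l ∈ Icc (0 : ℝ) 1, Dissipative (φ l))
    (hcoer : CoerciveFamily φ)
    (lam1 : ℝ) (hlam1 : lam1 ∈ Ioc (0 : ℝ) 1)
    (K : ℝ → Set (EuclideanSpace ℝ (Fin n)))
    (hcont : IsContinuation φ (Icc 0 lam1) K)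
    (hK0 : IsGlobalAttractor (φ 0) (K 0))
    (hattr : ∀ l ∈ Ioc (0 : ℝ) lam1, IsAttractor (φ l) (K l)) :
    ∃ lam0, 0 < lam0 ∧ lam0 ≤ lam1 ∧ ∀ l, 0 < l → l < lam0 →
      (complementarySet φ K l).Nonempty ∧
      IsIsolatedInvariant (φ l) (complementarySet φ K l) ∧
      complementarySet φ K l ⊆ (K l)ᶜ ∧
      ∃ U V : Set (EuclideanSpace ℝ (Fin n)),
        IsConnected U ∧ IsConnected V ∧ IsBounded U ∧ ¬ IsBounded V ∧
        Disjoint U V ∧ U ∪ V = (complementarySet φ K l)ᶜ ∧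
        (∀ x ∈ (complementarySet φ K l)ᶜ,
          connectedComponentIn ((complementarySet φ K l)ᶜ) x = U ∨
            connectedComponentIn ((complementarySet φ K l)ᶜ) x = V) ∧
        K l ⊆ U ∧ U = attractionRegion (φ l) (K l) :=
  coercive_complementarySet_separates_general hn φ hφ hdiss hcoer lam1 hlam1 K hcont hK0
end
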